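/- Let G be a simple graph on a countable vertex set that satisfies condition (A), and let M be a matching of G of maximal support, i.e., V(M) is not properly contained in the support of any other matching of G. Then M is a perfect matching of G. -/

import Mathlib

namespace PaperMatchings

variable {V : Type*}

/-- The support of a set of edges: all vertices incident to some edge in `M`. -/
def supp (M : Set (Sym2 V)) : Set V := {v | ∃ e ∈ M, v ∈ e}

/-- `M` is a matching of `G`: a set of edges of `G` such that no vertex is
incident to more than one edge of `M`. -/
def IsMatching (G : SimpleGraph V) (M : Set (Sym2 V)) : Prop :=
  M ⊆ G.edgeSet ∧ ∀ (v : V), ∀ e ∈ M, ∀ e' ∈ M, v ∈ e → v ∈ e' → e = e'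

/-- A perfect matching: a matching whose support is all of `V`. -/
def IsPerfectMatching (G : SimpleGraph V) (M : Set (Sym2 V)) : Prop :=
  IsMatching G M ∧ supp M = Set.univ

/-- A (finite or infinite) path in `G`, given by its number of vertices `n : ℕ∞`
(`⊤` meaning infinite) and the enumeration `f` of its vertices: it is injective on
indices below `n` and consecutive vertices are adjacent. -/
def IsPath (G : SimpleGraph V) (n : ℕ∞) (f : ℕ → V) : Prop :=
  1 ≤ n ∧
  (∀ i j : ℕ, (i : ℕ∞) < n → (j : ℕ∞) < n → f i = f j → i = j) ∧
  (∀ i : ℕ, ((i : ℕ∞) + 1) < n → G.Adj (f i) (f (i + 1)))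

/-- The consecutive edges of the path lie alternately in `M` and outside `M`. -/
def IsAlternating (M : Set (Sym2 V)) (n : ℕ∞) (f : ℕ → V) : Prop :=
  ∀ i : ℕ, ((i : ℕ∞) + 2) < n →
    (s(f i, f (i + 1)) ∈ M ↔ s(f (i + 1), f (i + 2)) ∉ M)

/-- An `M`-augmenting path starting at `s`: an `M`-alternating path (with at least one
edge) starting at the unmatched vertex `s`, which is either infinite or ends at an
unmatched vertex. -/
def IsAugmentingPath (G : SimpleGraph V) (M : Set (Sym2 V)) (n : ℕ∞) (f : ℕ → V)
    (s : V) : Prop :=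
  IsPath G n f ∧ IsAlternating M n f ∧ 1 < n ∧ f 0 = s ∧ s ∉ supp M ∧
  ∀ k : ℕ, n = (k : ℕ∞) + 1 → f k ∉ supp M

/-- The path contains at least one edge of `M`. -/
def IsProper (M : Set (Sym2 V)) (n : ℕ∞) (f : ℕ → V) : Prop :=
  ∃ i : ℕ, ((i : ℕ∞) + 1) < n ∧ s(f i, f (i + 1)) ∈ M

/-- Condition (A): for every matching `M` and every vertex `s` not in the support
of `M` there is an `M`-augmenting path starting at `s`. -/
def ConditionA (G : SimpleGraph V) : Prop :=
  ∀ M : Set (Sym2 V), IsMatching G M → ∀ s : V, s ∉ supp M →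
    ∃ (n : ℕ∞) (f : ℕ → V), IsAugmentingPath G M n f s

/-- An independent matching: a matching admitting no proper augmenting path. -/
def IndepMatching (G : SimpleGraph V) (M : Set (Sym2 V)) : Prop :=
  IsMatching G M ∧
    ¬ ∃ (s : V) (n : ℕ∞) (f : ℕ → V), IsAugmentingPath G M n f s ∧ IsProper M n f

/-- The induced subgraph of `G` on the vertex set `S` (vertices outside `S`
become isolated). -/
def restrict (G : SimpleGraph V) (S : Set V) : SimpleGraph V where
  Adj u v := G.Adj u v ∧ u ∈ S ∧ v ∈ S
  symm := by
    constructor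
    intro u v h
    exact ⟨h.1.symm, h.2.2, h.2.1⟩
  loopless := by
    constructor
    intro v h
    exact (G.ne_of_adj h.1) rfl

/-- `W` is an independent subgraph of `G`: the induced subgraph `G[W]` has a perfect
matching (i.e. `G` has a matching with support exactly `W`) and every such matching
is an independent matching of `G`. -/
def IndepSubgraph (G : SimpleGraph V) (W : Set V) : Prop :=
  (∃ M, IsMatching G M ∧ supp M = W) ∧
  ∀ M, IsMatching G M → supp M = W → IndepMatching G M

/-- The induced subgraph `G[W]` satisfies condition (A): for every matching of
`G[W]` and every vertex of `W` not in its support, there is an augmenting path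
inside `G[W]`. -/
def ConditionAOn (G : SimpleGraph V) (W : Set V) : Prop :=
  ∀ M : Set (Sym2 V), IsMatching (restrict G W) M → ∀ s ∈ W, s ∉ supp M →
    ∃ (n : ℕ∞) (f : ℕ → V), IsAugmentingPath (restrict G W) M n f s

/-!
Flipping an augmenting path `P` from the unmatched vertex `s` yields the matching `M ∆ E(P)`:
the edges of `P` alternate, starting outside `M`, so `M ∩ E(P)` are its odd edges and the
even ones replace them. Every matched vertex of `P` lies on an even edge (only the last vertex
of a finite `P` may lack one, and it is unmatched), and `s` lies on the first edge, so the
support grows strictly.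
-/

section AugmentingPath

variable {G : SimpleGraph V} {M : Set (Sym2 V)} {n : ℕ∞} {f : ℕ → V} {s v : V}

def pathEdges (n : ℕ∞) (f : ℕ → V) : Set (Sym2 V) :=
  {e | ∃ i : ℕ, (i : ℕ∞) + 1 < n ∧ e = s(f i, f (i + 1))}

lemma exists_even_pathEdge_mem {j : ℕ} (hj : (j : ℕ∞) + 1 < n) :
    ∃ i : ℕ, (i : ℕ∞) + 1 < n ∧ Even i ∧ f j ∈ s(f i, f (i + 1)) := by
  rcases Nat.even_or_odd j with hje | ⟨k, rfl⟩
  · exact ⟨j, hj, hje, Sym2.mem_mk_left _ _⟩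
  · refine ⟨2 * k, ?_, even_two_mul k, Sym2.mem_mk_right _ _⟩
    exact_mod_cast (lt_of_le_of_lt le_self_add hj : ((2 * k + 1 : ℕ) : ℕ∞) < n)

lemma exists_eq_of_mem_pathEdge {i : ℕ} (hi : (i : ℕ∞) + 1 < n) (hv : v ∈ s(f i, f (i + 1))) :
    ∃ j : ℕ, (j : ℕ∞) < n ∧ v = f j := by
  rcases Sym2.mem_iff.mp hv with rfl | rfl
  · exact ⟨i, lt_of_le_of_lt le_self_add hi, rfl⟩
  · exact ⟨i + 1, by exact_mod_cast hi, rfl⟩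

namespace IsPath

lemma eq_of_mem_pathEdge_of_even (hp : IsPath G n f) {i j : ℕ}
    (hi : (i : ℕ∞) + 1 < n) (hj : (j : ℕ∞) + 1 < n) (hie : Even i) (hje : Even j)
    (hvi : v ∈ s(f i, f (i + 1))) (hvj : v ∈ s(f j, f (j + 1))) : i = j := by
  have hlt : ∀ k : ℕ, (k : ℕ∞) + 1 < n → ∀ a, a ≤ k + 1 → (a : ℕ∞) < n := fun k hk a ha =>
    (Nat.cast_le.mpr ha).trans_lt (by exact_mod_cast hk)
  have hinj : ∀ a b, a ≤ i + 1 → b ≤ j + 1 → f a = f b → a = b := fun a b ha hb =>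
    hp.2.1 a b (hlt i hi a ha) (hlt j hj b hb)
  rw [Nat.even_iff] at hie hje
  rcases Sym2.mem_iff.mp hvi with rfl | rfl <;> rcases Sym2.mem_iff.mp hvj with h | h
  all_goals have := hinj _ _ (by omega) (by omega) h
  all_goals omega

end IsPath

namespace IsAugmentingPath

lemma pathEdge_mem_iff_odd (hp : IsAugmentingPath G M n f s) :
    ∀ i : ℕ, (i : ℕ∞) + 1 < n → (s(f i, f (i + 1)) ∈ M ↔ Odd i) := by
  obtain ⟨-, halt, -, hf0, hs, -⟩ := hp
  intro i
  induction i with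
  | zero =>
    intro _
    simp only [Nat.not_odd_zero, iff_false]
    exact fun he => hs ⟨_, he, hf0 ▸ Sym2.mem_mk_left _ _⟩
  | succ i ih =>
    intro hi
    have hi2 : (i : ℕ∞) + 2 < n := by
      convert hi using 1; push_cast; ring
    have hi1 : (i : ℕ∞) + 1 < n := by
      exact_mod_cast (lt_of_le_of_lt le_self_add hi : ((i + 1 : ℕ) : ℕ∞) < n)
    rw [Nat.odd_add_one, ← ih hi1]
    have := halt i hi2
    tauto

lemma add_one_lt_of_mem_supp (hp : IsAugmentingPath G M n f s) {j : ℕ} (hj : (j : ℕ∞) < n)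
    (hjM : f j ∈ supp M) : (j : ℕ∞) + 1 < n := by
  obtain ⟨-, -, -, -, -, hlast⟩ := hp
  exact lt_of_le_of_ne (Order.add_one_le_of_lt hj) fun h => hlast j h.symm hjM

lemma pos_of_mem_supp (hp : IsAugmentingPath G M n f s) {j : ℕ} (hjM : f j ∈ supp M) :
    0 < j := by
  obtain ⟨-, -, -, hf0, hs, -⟩ := hp
  exact Nat.pos_of_ne_zero fun h => hs (hf0 ▸ h ▸ hjM)

lemma mem_pathEdges_of_mem (hp : IsAugmentingPath G M n f s) (hM : IsMatching G M) {j : ℕ}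
    (hj : (j : ℕ∞) < n) {e : Sym2 V} (he : e ∈ M) (hje : f j ∈ e) : e ∈ pathEdges n f := by
  have hjM : f j ∈ supp M := ⟨e, he, hje⟩
  obtain ⟨k, rfl⟩ := Nat.exists_eq_add_of_le' (hp.pos_of_mem_supp hjM)
  have hk : (k : ℕ∞) + 1 < n := by exact_mod_cast hj
  rcases Nat.even_or_odd k with hke | hko
  · have hk1 : ((k + 1 : ℕ) : ℕ∞) + 1 < n := hp.add_one_lt_of_mem_supp hj hjM
    have hM1 := (hp.pathEdge_mem_iff_odd (k + 1) hk1).mpr hke.add_one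
    exact ⟨k + 1, hk1, hM.2 _ e he _ hM1 hje (Sym2.mem_mk_left _ _)⟩
  · have hM0 := (hp.pathEdge_mem_iff_odd k hk).mpr hko
    exact ⟨k, hk, hM.2 _ e he _ hM0 hje (Sym2.mem_mk_right _ _)⟩

lemma even_pathEdge_mem_symmDiff (hp : IsAugmentingPath G M n f s) {i : ℕ}
    (hi : (i : ℕ∞) + 1 < n) (hie : Even i) :
    s(f i, f (i + 1)) ∈ symmDiff M (pathEdges n f) :=
  Set.mem_symmDiff.mpr <| .inr
    ⟨⟨i, hi, rfl⟩, fun h => Nat.not_odd_iff_even.mpr hie ((hp.pathEdge_mem_iff_odd i hi).mp h)⟩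

lemma isMatching_symmDiff (hp : IsAugmentingPath G M n f s) (hM : IsMatching G M) :
    IsMatching G (symmDiff M (pathEdges n f)) := by
  refine ⟨fun e he => ?_, fun v e he e' he' hve hve' => ?_⟩
  · rcases Set.mem_symmDiff.mp he with ⟨heM, -⟩ | ⟨⟨i, hi, rfl⟩, -⟩
    · exact hM.1 heM
    · exact hp.1.2.2 i hi
  · rcases Set.mem_symmDiff.mp he with ⟨heM, heP⟩ | ⟨⟨i, hi, rfl⟩, heM⟩ <;>
      rcases Set.mem_symmDiff.mp he' with ⟨heM', heP'⟩ | ⟨⟨i', hi', rfl⟩, heM'⟩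
    · exact hM.2 v e heM e' heM' hve hve'
    · obtain ⟨j, hj, rfl⟩ := exists_eq_of_mem_pathEdge hi' hve'
      exact absurd (hp.mem_pathEdges_of_mem hM hj heM hve) heP
    · obtain ⟨j, hj, rfl⟩ := exists_eq_of_mem_pathEdge hi hve
      exact absurd (hp.mem_pathEdges_of_mem hM hj heM' hve') heP'
    · have hie := Nat.not_odd_iff_even.mp fun h => heM ((hp.pathEdge_mem_iff_odd i hi).mpr h)
      have hie' := Nat.not_odd_iff_even.mp fun h => heM' ((hp.pathEdge_mem_iff_odd i' hi').mpr h)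
      rw [hp.1.eq_of_mem_pathEdge_of_even hi hi' hie hie' hve hve']

lemma supp_ssubset_supp_symmDiff (hp : IsAugmentingPath G M n f s) :
    supp M ⊂ supp (symmDiff M (pathEdges n f)) := by
  obtain ⟨-, -, hn, hf0, hs, -⟩ := id hp
  refine ⟨fun v hv => ?_, fun hsub => hs (hsub ?_)⟩
  · obtain ⟨e, he, hve⟩ := hv
    by_cases heP : e ∈ pathEdges n f
    · obtain ⟨i, hi, rfl⟩ := heP
      have hvM : v ∈ supp M := ⟨_, he, hve⟩
      obtain ⟨j, hj, rfl⟩ := exists_eq_of_mem_pathEdge hi hve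
      obtain ⟨i', hi', hie', hji'⟩ := exists_even_pathEdge_mem (hp.add_one_lt_of_mem_supp hj hvM)
      exact ⟨_, hp.even_pathEdge_mem_symmDiff hi' hie', hji'⟩
    · exact ⟨e, Set.mem_symmDiff.mpr (.inl ⟨he, heP⟩), hve⟩
  · have h01 : ((0 : ℕ) : ℕ∞) + 1 < n := by simpa using hn
    exact ⟨_, hp.even_pathEdge_mem_symmDiff h01 Even.zero, hf0 ▸ Sym2.mem_mk_left _ _⟩

lemma exists_isMatching_supp_ssubset (hp : IsAugmentingPath G M n f s)
    (hM : IsMatching G M) : ∃ M' : Set (Sym2 V), IsMatching G M' ∧ supp M ⊂ supp M' :=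
  ⟨_, hp.isMatching_symmDiff hM, hp.supp_ssubset_supp_symmDiff⟩

end IsAugmentingPath

end AugmentingPath

theorem maximal_matching_is_perfect_general {V : Type*} (G : SimpleGraph V)
    (hA : ConditionA G) (M : Set (Sym2 V)) (hM : IsMatching G M)
    (hmax : ∀ M' : Set (Sym2 V), IsMatching G M' → ¬ supp M ⊂ supp M') :
    IsPerfectMatching G M := by
  refine ⟨hM, Set.eq_univ_of_forall fun s => ?_⟩
  by_contra hs
  obtain ⟨n, f, hp⟩ := hA M hM s hs
  obtain ⟨M', hM', hlt⟩ := hp.exists_isMatching_supp_ssubset hM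
  exact hmax M' hM' hlt

/-- In a graph satisfying condition (A), any matching of maximal
support is perfect. -/
theorem maximal_matching_is_perfect {V : Type*} [Countable V] (G : SimpleGraph V)
    (hA : ConditionA G) (M : Set (Sym2 V)) (hM : IsMatching G M)
    (hmax : ∀ M' : Set (Sym2 V), IsMatching G M' → ¬ supp M ⊂ supp M') :
    IsPerfectMatching G M :=
  maximal_matching_is_perfect_general G hA M hM hmax

end PaperMatchings
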